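/- Define in the group algebra ℂ[S_k] the functions G_{k,n}(σ) = n^{κ(σ)} (κ = number of cycles) and the ascension function Asc_{k,n}(σ) = Σ_{t=0}^{fix(σ)} (-1)^{k-t} C(fix(σ),t)/n^{↑(k-t)}. For k+1 ≤ n, the Weingarten function satisfies Wg_{k,n} = Asc_{k,n} * Wg_{k,n-1}, where * is convolution in ℂ[S_k] and Wg_{k,m} is the convolution inverse of G_{k,m}. -/

import Mathlib

open Finset

/-- Convolution product in the group algebra `ℂ[S_k]`:
`(f * g)(π) = Σ_σ f(σ) g(σ⁻¹ π)`. -/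
noncomputable def conv {k : ℕ} (f g : Equiv.Perm (Fin k) → ℂ) :
    Equiv.Perm (Fin k) → ℂ :=
  fun π => ∑ σ : Equiv.Perm (Fin k), f σ * g (σ⁻¹ * π)

/-- The number of cycles `κ(σ)` of a permutation (fixed points counted as cycles). -/
noncomputable def cyc {k : ℕ} (σ : Equiv.Perm (Fin k)) : ℕ :=
  σ.cycleType.card + (Finset.univ.filter fun i => σ i = i).card

/-- The number of fixed points of a permutation. -/
noncomputable def fixCount {k : ℕ} (σ : Equiv.Perm (Fin k)) : ℕ :=
  (Finset.univ.filter fun i => σ i = i).card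

/-- The Dirac function at the identity permutation. -/
noncomputable def deltaE {k : ℕ} : Equiv.Perm (Fin k) → ℂ :=
  fun π => if π = 1 then 1 else 0

/-- Rising factorial `z^{↑m} = z(z+1)⋯(z+m-1)`. -/
noncomputable def ascC (z : ℂ) (m : ℕ) : ℂ := ∏ j ∈ Finset.range m, (z + j)

/-- Falling factorial `z^{↓m} = z(z-1)⋯(z-m+1)`. -/
noncomputable def descC (z : ℂ) (m : ℕ) : ℂ := ∏ j ∈ Finset.range m, (z - j)

/-- The function `G_{k,z}(σ) = z^{κ(σ)}` in `ℂ[S_k]`. -/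
noncomputable def Gfun (k : ℕ) (z : ℂ) : Equiv.Perm (Fin k) → ℂ :=
  fun σ => z ^ (cyc σ)

/-- The ascension function
`Asc_{k,n}(σ) = Σ_{t=0}^{fix σ} (-1)^{k-t} C(fix σ, t)/n^{↑(k-t)}`. -/
noncomputable def AscFun (k n : ℕ) : Equiv.Perm (Fin k) → ℂ :=
  fun σ => ∑ t ∈ Finset.range (fixCount σ + 1),
    (-1 : ℂ) ^ (k - t) * ((fixCount σ).choose t : ℂ) / ascC (n : ℂ) (k - t)

/-- The descension function
`Des_{k,n}(σ) = sgn(σ) Σ_{t=0}^{fix σ} C(fix σ, t)/n^{↓(k-t)}`. -/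
noncomputable def DesFun (k n : ℕ) : Equiv.Perm (Fin k) → ℂ :=
  fun σ => ((Equiv.Perm.sign σ : ℤ) : ℂ) * ∑ t ∈ Finset.range (fixCount σ + 1),
    ((fixCount σ).choose t : ℂ) / descC (n : ℂ) (k - t)

/-!
Since `Wg_{k,n-1}` inverts `G_{k,n-1}`, it suffices to prove `G_{k,n} * Asc_{k,n} = G_{k,n-1}`.
Write `S_T` for the permutations fixing every point outside `T`. Then `Asc_{k,n}(τ)` is the sum
of `(-1)^{|T|} / n^{↑|T|}` over the sets `T` with `τ ∈ S_T`, so the left side at `π` is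
`Σ_T (-1)^{|T|} / n^{↑|T|} · Σ_{τ ∈ S_T} n^{κ(πτ)}`.
The inner sum is `n^{↑|T|} n^{c(π, Tᶜ)}`, where `c(π, S)` counts the cycles of `π` inside `S`.
Indeed, write `τ = (i j) τ'` with `j ∈ T` and `τ' ∈ S_{T \ {i}}`: the cycles of `π (i j)` inside
`(T \ {i})ᶜ` are those of `π` inside `Tᶜ`, together with the cycle through `i` for exactly one
`j`, the last point of `T` before `i` on its `π`-cycle; this gives the factor `n + |T| - 1`.
Finally `Σ_T (-1)^{|T|} ((n-1)+1)^{c(π, Tᶜ)} = (n-1)^{κ(π)}` by inclusion–exclusion over the sets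
of cycles of `π`.
-/

open Equiv Equiv.Perm

section Orbits

variable {α : Type*} [Fintype α] [DecidableEq α] {σ : Perm α} {x y : α}

def orbitFinset (σ : Perm α) (x : α) : Finset α := {y | σ.SameCycle x y}

@[simp]
lemma mem_orbitFinset : y ∈ orbitFinset σ x ↔ σ.SameCycle x y := by
  simp [orbitFinset]

lemma mem_orbitFinset_iff_exists_pow : y ∈ orbitFinset σ x ↔ ∃ m : ℕ, (σ ^ m) x = y :=
  mem_orbitFinset.trans
    ⟨SameCycle.exists_nat_pow_eq, fun ⟨m, hm⟩ => ⟨m, by rw [zpow_natCast, hm]⟩⟩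

lemma pow_apply_mem_orbitFinset (σ : Perm α) (x : α) (m : ℕ) : (σ ^ m) x ∈ orbitFinset σ x :=
  mem_orbitFinset_iff_exists_pow.2 ⟨m, rfl⟩

lemma self_mem_orbitFinset (σ : Perm α) (x : α) : x ∈ orbitFinset σ x :=
  pow_apply_mem_orbitFinset σ x 0

lemma orbitFinset_eq_of_mem (h : y ∈ orbitFinset σ x) : orbitFinset σ y = orbitFinset σ x := by
  ext z
  simp only [mem_orbitFinset] at h ⊢
  exact ⟨(h.trans ·), (h.symm.trans ·)⟩

lemma orbitFinset_eq_singleton (hx : σ x = x) : orbitFinset σ x = {x} := by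
  ext y
  rw [mem_orbitFinset, mem_singleton]
  exact ⟨fun h => (h.eq_of_left hx).symm, fun h => h ▸ SameCycle.rfl⟩

lemma orbitFinset_eq_support_cycleOf (hx : σ x ≠ x) :
    orbitFinset σ x = (σ.cycleOf x).support := by
  ext y
  rw [mem_orbitFinset, mem_support_cycleOf_iff' hx]

def orbitFinsets (σ : Perm α) : Finset (Finset α) := univ.image (orbitFinset σ)

lemma mem_orbitFinsets {O : Finset α} : O ∈ orbitFinsets σ ↔ ∃ x, orbitFinset σ x = O := by
  simp [orbitFinsets]

lemma orbitFinsets_eq_union (σ : Perm α) :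
    orbitFinsets σ =
      σ.cycleFactorsFinset.image support ∪ ({x | σ x = x} : Finset α).image singleton := by
  ext O
  simp only [mem_orbitFinsets, mem_union, mem_image, mem_filter, mem_univ, true_and]
  constructor
  · rintro ⟨x, rfl⟩
    by_cases hx : σ x = x
    · exact .inr ⟨x, hx, (orbitFinset_eq_singleton hx).symm⟩
    · exact .inl ⟨σ.cycleOf x, cycleOf_mem_cycleFactorsFinset_iff.2 (mem_support.2 hx),
        (orbitFinset_eq_support_cycleOf hx).symm⟩
  · rintro (⟨c, hc, rfl⟩ | ⟨x, hx, rfl⟩)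
    · obtain ⟨a, ha⟩ := (mem_cycleFactorsFinset_iff.1 hc).1.nonempty_support
      refine ⟨a, ?_⟩
      rw [orbitFinset_eq_support_cycleOf (mem_support.1 (mem_cycleFactorsFinset_support_le hc ha)),
        ← cycle_is_cycleOf ha hc]
    · exact ⟨x, orbitFinset_eq_singleton hx⟩

lemma card_orbitFinsets (σ : Perm α) :
    #(orbitFinsets σ) = σ.cycleType.card + #({x | σ x = x} : Finset α) := by
  have hdisj : Disjoint (σ.cycleFactorsFinset.image support)
      (({x | σ x = x} : Finset α).image singleton) := by
    simp only [disjoint_left, mem_image, not_exists, not_and]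
    rintro _ ⟨c, hc, rfl⟩ x - hcx
    have := (mem_cycleFactorsFinset_iff.1 hc).1.two_le_card_support
    rw [← hcx, card_singleton] at this
    omega
  have hinj : Set.InjOn support (σ.cycleFactorsFinset : Set (Perm α)) := by
    intro c hc d hd hcd
    obtain ⟨a, ha⟩ := (mem_cycleFactorsFinset_iff.1 hc).1.nonempty_support
    rw [cycle_is_cycleOf ha hc, cycle_is_cycleOf (hcd ▸ ha) hd]
  rw [orbitFinsets_eq_union, card_union_of_disjoint hdisj, card_image_of_injOn hinj,
    card_image_of_injective _ singleton_injective, cycleType_def, Multiset.card_map]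
  rfl

def numOrbitsWithin (σ : Perm α) (S : Finset α) : ℕ := #{O ∈ orbitFinsets σ | O ⊆ S}

lemma numOrbitsWithin_univ (σ : Perm α) : numOrbitsWithin σ univ = #(orbitFinsets σ) := by
  simp [numOrbitsWithin]

end Orbits

lemma cyc_eq_card_orbitFinsets {k : ℕ} (σ : Perm (Fin k)) : cyc σ = #(orbitFinsets σ) :=
  (card_orbitFinsets σ).symm

section MulSwap

variable {α : Type*} {π σ : Perm α} {x : α}

lemma pow_apply_eq_of_forall_lt {s : ℕ} (h : ∀ t < s, σ ((π ^ t) x) = π ((π ^ t) x)) :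
    (σ ^ s) x = (π ^ s) x := by
  induction s with
  | zero => rfl
  | succ s ih =>
    rw [pow_succ', mul_apply, ih fun t ht => h t (by omega), h s s.lt_succ_self, ← mul_apply,
      ← pow_succ']

variable [Fintype α] [DecidableEq α] {A B : Finset α} {i j : α}

lemma orbitFinset_mul_swap (hi : i ∉ orbitFinset π x) (hj : j ∉ orbitFinset π x) :
    orbitFinset (π * swap i j) x = orbitFinset π x := by
  have hpow (m : ℕ) : ((π * swap i j) ^ m) x = (π ^ m) x :=
    pow_apply_eq_of_forall_lt fun t _ => by
      have hmem := pow_apply_mem_orbitFinset π x t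
      rw [mul_apply, swap_apply_of_ne_of_ne (by rintro h; exact hi (h ▸ hmem))
        (by rintro h; exact hj (h ▸ hmem))]
  ext y
  simp only [mem_orbitFinset_iff_exists_pow, hpow]

lemma filter_orbitFinsets_mul_swap (hi : i ∈ B) (hj : j ∈ B) :
    {O ∈ orbitFinsets (π * swap i j) | O ⊆ Bᶜ} = {O ∈ orbitFinsets π | O ⊆ Bᶜ} := by
  have key (π : Perm α) :
      {O ∈ orbitFinsets π | O ⊆ Bᶜ} ⊆ {O ∈ orbitFinsets (π * swap i j) | O ⊆ Bᶜ} := by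
    intro O hO
    obtain ⟨hO, hOB⟩ := mem_filter.1 hO
    obtain ⟨y, rfl⟩ := mem_orbitFinsets.1 hO
    exact mem_filter.2 ⟨mem_orbitFinsets.2 ⟨y, orbitFinset_mul_swap
      (fun h => mem_compl.1 (hOB h) hi) (fun h => mem_compl.1 (hOB h) hj)⟩, hOB⟩
  refine (key π).antisymm' ?_
  simpa only [mul_swap_mul_self] using key (π * swap i j)

lemma filter_orbitFinsets_mem (σ : Perm α) (x : α) :
    {O ∈ orbitFinsets σ | x ∈ O} = {orbitFinset σ x} := by
  ext O
  simp only [mem_filter, mem_orbitFinsets, mem_singleton]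
  constructor
  · rintro ⟨⟨y, rfl⟩, hx⟩
    exact (orbitFinset_eq_of_mem hx).symm
  · rintro rfl
    exact ⟨⟨x, rfl⟩, self_mem_orbitFinset σ x⟩

lemma numOrbitsWithin_compl_eq_add (σ : Perm α) (x : α) (A : Finset α) :
    numOrbitsWithin σ Aᶜ =
      numOrbitsWithin σ (insert x A)ᶜ + if orbitFinset σ x ⊆ Aᶜ then 1 else 0 := by
  have hsplit := card_filter_add_card_filter_not (s := {O ∈ orbitFinsets σ | O ⊆ Aᶜ})
    (fun O => x ∉ O)
  simp only [filter_filter, not_not] at hsplit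
  rw [numOrbitsWithin, numOrbitsWithin, ← hsplit]
  congr 1
  · congr 1
    refine filter_congr fun O _ => ?_
    rw [compl_insert, subset_erase]
  · have hmem : {O ∈ orbitFinsets σ | O ⊆ Aᶜ ∧ x ∈ O} =
        {O ∈ ({orbitFinset σ x} : Finset (Finset α)) | O ⊆ Aᶜ} := by
      rw [← filter_orbitFinsets_mem, filter_filter]
      simp only [and_comm]
    rw [hmem, filter_singleton]
    split_ifs <;> rfl

lemma numOrbitsWithin_mul_swap (hj : j ∈ insert i A) :
    numOrbitsWithin (π * swap i j) Aᶜ =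
      numOrbitsWithin π (insert i A)ᶜ + if orbitFinset (π * swap i j) i ⊆ Aᶜ then 1 else 0 := by
  rw [numOrbitsWithin_compl_eq_add _ i, numOrbitsWithin, numOrbitsWithin,
    filter_orbitFinsets_mul_swap (mem_insert_self i A) hj]

end MulSwap

section PermsOfFinset

variable {α : Type*} [Fintype α] [DecidableEq α] {A : Finset α} {i : α}

lemma mem_permsOfFinset_iff_support_subset {τ : Perm α} : τ ∈ permsOfFinset A ↔ τ.support ⊆ A := by
  simp [mem_perms_of_finset_iff, subset_iff]

lemma permsOfFinset_empty : permsOfFinset (∅ : Finset α) = {1} := by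
  ext τ
  simp [mem_permsOfFinset_iff_support_subset]

lemma sum_permsOfFinset_insert {M : Type*} [AddCommMonoid M] (hi : i ∉ A) (f : Perm α → M) :
    ∑ τ ∈ permsOfFinset (insert i A), f τ =
      ∑ j ∈ insert i A, ∑ τ ∈ permsOfFinset A, f (swap i j * τ) := by
  rw [← sum_product']
  refine sum_nbij' (fun τ => (τ i, swap i (τ i) * τ)) (fun p => swap i p.1 * p.2) ?_ ?_ ?_ ?_ ?_
  · intro τ hτ
    simp only [mem_perms_of_finset_iff, mem_product] at hτ ⊢
    refine ⟨?_, fun {x} hx => ?_⟩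
    · by_cases h : τ i = i
      · rw [h]
        exact mem_insert_self i A
      · exact hτ fun h' => h (τ.injective h')
    · have hxi : x ≠ i := by
        rintro rfl
        simp [mul_apply] at hx
      refine mem_of_mem_insert_of_ne (hτ fun hfix => hx ?_) hxi
      rw [mul_apply, hfix, swap_apply_of_ne_of_ne hxi]
      intro hxτ
      exact hxi (hxτ.trans (τ.injective (by rwa [hxτ] at hfix)))
  · rintro ⟨j, τ⟩ h
    simp only [mem_product, mem_perms_of_finset_iff] at h ⊢
    intro x hx
    by_contra hxA
    have hτx : τ x = x := by_contra fun h' => hxA (mem_insert_of_mem (h.2 h'))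
    rw [mul_apply, hτx, swap_apply_of_ne_of_ne (by rintro rfl; exact hxA (mem_insert_self _ _))
      (by rintro rfl; exact hxA h.1)] at hx
    exact hx rfl
  · intro τ _
    exact swap_mul_self_mul _ _ _
  · rintro ⟨j, τ⟩ h
    simp only [mem_permsOfFinset_iff_support_subset, mem_product] at h
    have hτi : τ i = i := notMem_support.1 fun h' => hi (h.2 h')
    simp [mul_apply, hτi, swap_mul_self_mul]
  · intro τ _
    simp [swap_mul_self_mul]

end PermsOfFinset

section IsNextIn

variable {α : Type*} {π : Perm α} {B : Finset α} {i j j' : α}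

def IsNextIn (π : Perm α) (B : Finset α) (j i : α) : Prop :=
  ∃ m, 0 < m ∧ (π ^ m) j = i ∧ ∀ t, 0 < t → t < m → (π ^ t) j ∉ B

lemma IsNextIn.unique (hj : j ∈ B) (hj' : j' ∈ B) (h : IsNextIn π B j i)
    (h' : IsNextIn π B j' i) : j = j' := by
  obtain ⟨m, hm, hmi, hmB⟩ := h
  obtain ⟨m', hm', hmi', hmB'⟩ := h'
  wlog hle : m ≤ m' generalizing j j' m m'
  · exact (this hj' hj m' hm' hmi' hmB' m hm hmi hmB (by omega)).symm
  have hback : (π ^ (m' - m)) j' = j := by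
    apply (π ^ m).injective
    rw [← mul_apply, ← pow_add, Nat.add_sub_cancel' hle, hmi', hmi]
  rcases Nat.eq_zero_or_pos (m' - m) with h0 | hpos
  · rw [h0, pow_zero, one_apply] at hback
    exact hback.symm
  · exact absurd (hback ▸ hj) (hmB' _ hpos (by omega))

variable [DecidableEq α]

lemma mul_swap_apply_of_notMem {y : α} (hi : i ∈ B) (hj : j ∈ B) (hy : y ∉ B) :
    (π * swap i j) y = π y := by
  rw [mul_apply, swap_apply_of_ne_of_ne (by rintro rfl; exact hy hi) (by rintro rfl; exact hy hj)]

lemma mul_swap_pow_apply_of_pow_notMem (hi : i ∈ B) (hj : j ∈ B) {s : ℕ} (hs : 0 < s)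
    (h : ∀ t, 0 < t → t < s → (π ^ t) j ∉ B) : ((π * swap i j) ^ s) i = (π ^ s) j := by
  obtain ⟨s, rfl⟩ := Nat.exists_eq_add_of_lt hs
  rw [zero_add, pow_succ, mul_apply, mul_apply π, swap_apply_left, pow_succ, mul_apply]
  refine pow_apply_eq_of_forall_lt fun t ht => mul_swap_apply_of_notMem hi hj ?_
  rw [← mul_apply, ← pow_succ]
  exact h _ t.succ_pos (by omega)

lemma mul_swap_pow_apply_of_mul_swap_pow_notMem (hi : i ∈ B) (hj : j ∈ B) {s : ℕ} (hs : 0 < s)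
    (h : ∀ t, 0 < t → t < s → ((π * swap i j) ^ t) i ∉ B) :
    ((π * swap i j) ^ s) i = (π ^ s) j := by
  obtain ⟨s, rfl⟩ := Nat.exists_eq_add_of_lt hs
  rw [zero_add, pow_succ, mul_apply, mul_apply π, swap_apply_left, pow_succ, mul_apply]
  refine (pow_apply_eq_of_forall_lt fun t ht => (mul_swap_apply_of_notMem hi hj ?_).symm).symm
  have hσi : (π * swap i j) i = π j := by rw [mul_apply, swap_apply_left]
  rw [← hσi, ← mul_apply, ← pow_succ]
  exact h _ t.succ_pos (by omega)

variable [Fintype α] {A : Finset α}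

lemma exists_isNextIn (hi : i ∈ B) : ∃ j ∈ B, IsNextIn π B j i := by
  have hex : ∃ r, 0 < r ∧ (π⁻¹ ^ r) i ∈ B :=
    ⟨orderOf π⁻¹, orderOf_pos _, by rwa [pow_orderOf_eq_one, one_apply]⟩
  obtain ⟨hr, hrB⟩ := Nat.find_spec hex
  refine ⟨_, hrB, Nat.find hex, hr, by rw [inv_pow, coe_inv, apply_symm_apply],
    fun t ht htr htB => ?_⟩
  have hsplit : π⁻¹ ^ Nat.find hex = π⁻¹ ^ t * π⁻¹ ^ (Nat.find hex - t) := by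
    rw [← pow_add, Nat.add_sub_cancel' htr.le]
  rw [hsplit, mul_apply, inv_pow, coe_inv, apply_symm_apply] at htB
  exact Nat.find_min hex (show Nat.find hex - t < Nat.find hex by omega) ⟨by omega, htB⟩

lemma orbitFinset_mul_swap_subset_compl_iff (hiA : i ∉ A) (hj : j ∈ insert i A) :
    orbitFinset (π * swap i j) i ⊆ Aᶜ ↔ IsNextIn π (insert i A) j i := by
  have hi := mem_insert_self i A
  constructor
  · intro hsub
    have hex : ∃ m, 0 < m ∧ ((π * swap i j) ^ m) i = i :=
      ⟨orderOf _, orderOf_pos _, by rw [pow_orderOf_eq_one, one_apply]⟩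
    obtain ⟨hm, hmi⟩ := Nat.find_spec hex
    have hnotMem (t : ℕ) (ht : 0 < t) (htm : t < Nat.find hex) :
        ((π * swap i j) ^ t) i ∉ insert i A := by
      rw [mem_insert, not_or]
      exact ⟨fun h => Nat.find_min hex htm ⟨ht, h⟩,
        mem_compl.1 (hsub (pow_apply_mem_orbitFinset _ i t))⟩
    have htraj (t : ℕ) (ht : 0 < t) (htm : t ≤ Nat.find hex) :=
      mul_swap_pow_apply_of_mul_swap_pow_notMem hi hj ht fun u hu hut =>
        hnotMem u hu (by omega)
    refine ⟨Nat.find hex, hm, (htraj _ hm le_rfl) ▸ hmi, fun t ht htm => ?_⟩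
    rw [← htraj t ht htm.le]
    exact hnotMem t ht htm
  · rintro ⟨m, hm, hmi, hmB⟩
    have htraj (t : ℕ) (ht : 0 < t) (htm : t ≤ m) :=
      mul_swap_pow_apply_of_pow_notMem hi hj ht fun u hu hut => hmB u hu (by omega)
    have hper : ((π * swap i j) ^ m) i = i := (htraj m hm le_rfl).trans hmi
    intro y hy
    obtain ⟨u, rfl⟩ := mem_orbitFinset_iff_exists_pow.1 hy
    rw [← Nat.mod_add_div u m, pow_add, mul_apply, pow_mul,
      pow_apply_eq_self_of_apply_eq_self hper]
    rcases Nat.eq_zero_or_pos (u % m) with h0 | hpos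
    · rw [h0, pow_zero, one_apply]
      exact mem_compl.2 hiA
    · rw [htraj _ hpos (Nat.mod_lt _ hm).le]
      exact mem_compl.2 fun h => hmB _ hpos (Nat.mod_lt _ hm) (mem_insert_of_mem h)

end IsNextIn

section OrbitSums

variable {α : Type*} [Fintype α] [DecidableEq α]

theorem sum_permsOfFinset_pow_card_orbitFinsets {R : Type*} [CommSemiring R] (x : R)
    (A : Finset α) (π : Perm α) :
    ∑ τ ∈ permsOfFinset A, x ^ #(orbitFinsets (π * τ)) =
      (∏ l ∈ range #A, (x + l)) * x ^ numOrbitsWithin π Aᶜ := by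
  induction A using Finset.induction_on generalizing π with
  | empty => simp [permsOfFinset_empty, numOrbitsWithin_univ]
  | insert i A hiA ih =>
    obtain ⟨j₀, hj₀, hnext⟩ := exists_isNextIn (π := π) (mem_insert_self i A)
    have hterm (j : α) (hj : j ∈ insert i A) :
        ∑ τ ∈ permsOfFinset A, x ^ #(orbitFinsets (π * (swap i j * τ))) =
          (∏ l ∈ range #A, (x + l)) * x ^ numOrbitsWithin π (insert i A)ᶜ *
            if j = j₀ then x else 1 := by
      have hiff : IsNextIn π (insert i A) j i ↔ j = j₀ :=
        ⟨fun h => h.unique hj hj₀ hnext, fun h => h ▸ hnext⟩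
      simp only [← mul_assoc, ih, numOrbitsWithin_mul_swap hj,
        orbitFinset_mul_swap_subset_compl_iff hiA hj, hiff]
      split_ifs <;> ring
    have hcount : ∑ j ∈ insert i A, (if j = j₀ then x else 1) = x + #A := by
      rw [← add_sum_erase _ _ hj₀, if_pos rfl,
        sum_congr rfl fun j hj => if_neg (ne_of_mem_erase hj), sum_const, nsmul_one,
        card_erase_of_mem hj₀, card_insert_of_notMem hiA, Nat.add_sub_cancel]
    rw [sum_permsOfFinset_insert hiA, sum_congr rfl hterm, ← mul_sum, hcount,
      card_insert_of_notMem hiA, prod_range_succ]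
    ring

end OrbitSums

section InclusionExclusion

variable {α : Type*} [Fintype α] [DecidableEq α] {σ : Perm α}

lemma sup_id_eq_univ_iff_eq_orbitFinsets {W : Finset (Finset α)} (hW : W ⊆ orbitFinsets σ) :
    W.sup id = univ ↔ W = orbitFinsets σ := by
  constructor
  · intro hsup
    refine hW.antisymm fun O hO => ?_
    obtain ⟨y, rfl⟩ := mem_orbitFinsets.1 hO
    obtain ⟨O', hO'W, hyO'⟩ := mem_sup.1 (hsup ▸ mem_univ y : y ∈ W.sup id)
    obtain ⟨z, rfl⟩ := mem_orbitFinsets.1 (hW hO'W)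
    rwa [orbitFinset_eq_of_mem hyO']
  · rintro rfl
    exact eq_univ_of_forall fun y =>
      mem_sup.2 ⟨_, mem_orbitFinsets.2 ⟨y, rfl⟩, self_mem_orbitFinset σ y⟩

lemma add_one_pow_numOrbitsWithin {R : Type*} [CommSemiring R] (x : R) (S : Finset α) :
    (x + 1) ^ numOrbitsWithin σ S =
      ∑ W ∈ (orbitFinsets σ).powerset, if W.sup id ⊆ S then x ^ #W else 0 := by
  rw [numOrbitsWithin, ← prod_const, prod_add_one, ← sum_filter]
  refine sum_congr ?_ fun W _ => prod_const x
  ext W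
  simp only [mem_powerset, mem_filter, subset_iff, Finset.sup_le_iff, id]
  exact ⟨fun h => ⟨fun O hO => (h hO).1, fun O hO => (h hO).2⟩,
    fun h O hO => ⟨h.1 hO, h.2 O hO⟩⟩

theorem sum_neg_one_pow_mul_add_one_pow_numOrbitsWithin_compl {R : Type*} [CommRing R]
    (σ : Perm α) (x : R) :
    ∑ T : Finset α, (-1) ^ #T * (x + 1) ^ numOrbitsWithin σ Tᶜ = x ^ #(orbitFinsets σ) := by
  have halternating (U : Finset α) :
      ∑ T : Finset α, (if T ⊆ Uᶜ then (-1 : R) ^ #T else 0) = if U = univ then 1 else 0 := by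
    rw [← sum_filter, filter_subset_univ]
    have h := congrArg (Int.cast : ℤ → R) (sum_powerset_neg_one_pow_card (x := Uᶜ))
    push_cast [compl_eq_empty_iff] at h
    exact h
  calc ∑ T : Finset α, (-1) ^ #T * (x + 1) ^ numOrbitsWithin σ Tᶜ
      = ∑ W ∈ (orbitFinsets σ).powerset,
          x ^ #W * ∑ T : Finset α, if T ⊆ (W.sup id)ᶜ then (-1 : R) ^ #T else 0 := by
        simp only [add_one_pow_numOrbitsWithin, mul_sum]
        rw [sum_comm]
        refine sum_congr rfl fun W _ => sum_congr rfl fun T _ => ?_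
        simp only [subset_compl_comm (s := W.sup id)]
        split_ifs <;> ring
    _ = ∑ W ∈ (orbitFinsets σ).powerset, if W = orbitFinsets σ then x ^ #W else 0 :=
        sum_congr rfl fun W hW => by
          simp only [halternating, sup_id_eq_univ_iff_eq_orbitFinsets (mem_powerset.1 hW),
            mul_boole]
    _ = x ^ #(orbitFinsets σ) := by rw [sum_ite_eq', if_pos (mem_powerset_self _)]

end InclusionExclusion

section GroupAlgebra

variable {k : ℕ}

lemma conv_deltaE (f : Perm (Fin k) → ℂ) : conv f deltaE = f := by
  funext π
  simp [conv, deltaE, inv_mul_eq_one]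

lemma deltaE_conv (f : Perm (Fin k) → ℂ) : conv deltaE f = f := by
  funext π
  simp [conv, deltaE]

lemma conv_assoc (f g h : Perm (Fin k) → ℂ) : conv (conv f g) h = conv f (conv g h) := by
  funext π
  simp only [conv, sum_mul, mul_sum]
  rw [sum_comm]
  refine sum_congr rfl fun ρ _ => ?_
  rw [← Equiv.sum_comp (Equiv.mulLeft ρ)]
  simp only [Equiv.coe_mulLeft, inv_mul_cancel_left, mul_inv_rev, mul_assoc]

lemma fixCount_inv (τ : Perm (Fin k)) : fixCount τ⁻¹ = fixCount τ := by
  unfold fixCount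
  congr 1
  ext x
  rw [mem_filter, mem_filter, inv_eq_iff_eq, eq_comm]

lemma AscFun_inv (n : ℕ) (τ : Perm (Fin k)) : AscFun k n τ⁻¹ = AscFun k n τ := by
  rw [AscFun, AscFun, fixCount_inv]

lemma AscFun_eq_sum (n : ℕ) (τ : Perm (Fin k)) :
    AscFun k n τ = ∑ T : Finset (Fin k),
      if τ ∈ permsOfFinset T then (-1) ^ #T / ascC n #T else 0 := by
  rw [← Equiv.sum_comp (compl_involutive.toPerm _)]
  have hmem (S : Finset (Fin k)) : τ ∈ permsOfFinset Sᶜ ↔ S ⊆ ({x | τ x = x} : Finset (Fin k)) := by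
    simp only [mem_perms_of_finset_iff, mem_compl, subset_iff, mem_filter, mem_univ, true_and]
    exact ⟨fun h x hx => not_not.1 fun h' => h h' hx, fun h x hx hxS => hx (h hxS)⟩
  simp only [Function.Involutive.coe_toPerm, hmem, card_compl, Fintype.card_fin]
  rw [← sum_filter, filter_subset_univ,
    sum_powerset_apply_card fun t => (-1 : ℂ) ^ (k - t) / ascC n (k - t)]
  refine sum_congr rfl fun t _ => ?_
  rw [nsmul_eq_mul, fixCount]
  ring

lemma ascC_natCast_ne_zero {n : ℕ} (hn : 0 < n) (m : ℕ) : ascC n m ≠ 0 :=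
  prod_ne_zero_iff.2 fun j _ => by exact_mod_cast (Nat.add_pos_left hn j).ne'

theorem conv_Gfun_AscFun {n : ℕ} (hn : 0 < n) :
    conv (Gfun k n) (AscFun k n) = Gfun k ((n - 1 : ℕ) : ℂ) := by
  funext π
  calc conv (Gfun k n) (AscFun k n) π
      = ∑ τ, (n : ℂ) ^ #(orbitFinsets (π * τ)) * AscFun k n τ := by
        rw [conv, ← Equiv.sum_comp (Equiv.mulLeft π)]
        refine sum_congr rfl fun τ _ => ?_
        rw [Equiv.coe_mulLeft, Gfun, cyc_eq_card_orbitFinsets, mul_inv_rev, inv_mul_cancel_right,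
          AscFun_inv]
    _ = ∑ T : Finset (Fin k), (-1) ^ #T / ascC n #T *
          ∑ τ ∈ permsOfFinset T, (n : ℂ) ^ #(orbitFinsets (π * τ)) := by
        simp only [AscFun_eq_sum, mul_sum, mul_ite, mul_zero]
        rw [sum_comm]
        refine sum_congr rfl fun T _ => ?_
        rw [sum_ite_mem, univ_inter]
        exact sum_congr rfl fun τ _ => mul_comm _ _
    _ = ∑ T : Finset (Fin k), (-1) ^ #T * (((n - 1 : ℕ) : ℂ) + 1) ^ numOrbitsWithin π Tᶜ := by
        refine sum_congr rfl fun T _ => ?_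
        rw [sum_permsOfFinset_pow_card_orbitFinsets, Nat.cast_sub hn, Nat.cast_one, sub_add_cancel,
          ← ascC, ← mul_assoc, div_mul_cancel₀ _ (ascC_natCast_ne_zero hn _)]
    _ = Gfun k ((n - 1 : ℕ) : ℂ) π := by
        rw [sum_neg_one_pow_mul_add_one_pow_numOrbitsWithin_compl, Gfun, cyc_eq_card_orbitFinsets]

end GroupAlgebra

theorem weingarten_ascension_recursion_general (k n : ℕ) (h : k + 1 ≤ n)
    (Wgn Wgm : Equiv.Perm (Fin k) → ℂ)
    (h1' : conv Wgn (Gfun k (n : ℂ)) = deltaE)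
    (h2 : conv (Gfun k ((n - 1 : ℕ) : ℂ)) Wgm = deltaE) :
    Wgn = conv (AscFun k n) Wgm := by
  calc Wgn = conv Wgn (conv (Gfun k ((n - 1 : ℕ) : ℂ)) Wgm) := by rw [h2, conv_deltaE]
    _ = conv (conv Wgn (Gfun k n)) (conv (AscFun k n) Wgm) := by
        rw [← conv_Gfun_AscFun (by omega), conv_assoc, conv_assoc]
    _ = conv (AscFun k n) Wgm := by rw [h1', deltaE_conv]

/-- For `k + 1 ≤ n`, the Weingarten function satisfies
`Wg_{k,n} = Asc_{k,n} * Wg_{k,n-1}`, where `Wg_{k,m}` denotes the convolution inverse of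
`G_{k,m}(σ) = m^{κ(σ)}` in `ℂ[S_k]`. -/
theorem weingarten_ascension_recursion (k n : ℕ) (h : k + 1 ≤ n)
    (Wgn Wgm : Equiv.Perm (Fin k) → ℂ)
    (h1 : conv (Gfun k (n : ℂ)) Wgn = deltaE)
    (h1' : conv Wgn (Gfun k (n : ℂ)) = deltaE)
    (h2 : conv (Gfun k ((n - 1 : ℕ) : ℂ)) Wgm = deltaE)
    (h2' : conv Wgm (Gfun k ((n - 1 : ℕ) : ℂ)) = deltaE) :
    Wgn = conv (AscFun k n) Wgm :=
  weingarten_ascension_recursion_general k n h Wgn Wgm h1' h2
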